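/- arXiv:0901.2658 — 5 statements merged into one kernel-verified Lean document; each statement's English description precedes it below -/
import Mathlib

section
/- The point P₁ = (15, 90) on the elliptic curve Y² = X³ - 2025X + 35100 over ℚ has infinite order. -/
/-- The elliptic curve Y² = X³ - 2025X + 35100 over ℚ. -/
def E00 : WeierstrassCurve.Affine ℚ :=
  { a₁ := 0, a₂ := 0, a₃ := 0, a₄ := -2025, a₆ := 35100 }

/-!
On a curve `y² = x³ + a₄x + a₆` with `a₄` a 2-adic integer, doubling a point whose coordinates
have 2-adic valuations `-2k` and `-3k` with `k ≥ 1` gives one with valuations `-2(k+1)` and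
`-3(k+1)`: the tangent slope `(3x² + a₄)/(2y)` has valuation `-k-1`, and in each of the
doubling formulas one term strictly dominates. Since `2P₁ = (105/4, -45/8)` has valuations
`(-2, -3)`, the points `2^n • 2P₁` have pairwise different `x`-coordinates, so `2P₁`, and hence
`P₁`, has infinite order.
-/

lemma padicValRat_two_two : padicValRat 2 2 = 1 := by
  simpa using padicValRat.self (p := 2) one_lt_two

lemma padicValRat_two_odd_div_two_pow {a : ℤ} (ha : Odd a) (n : ℕ) :
    padicValRat 2 (a / 2 ^ n) = -n := by
  have ha₀ : a ≠ 0 := by rintro rfl; simp at ha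
  have ha₂ : padicValInt 2 a = 0 :=
    padicValInt.eq_zero_of_not_dvd (by simpa [← even_iff_two_dvd] using ha)
  rw [padicValRat.div (by exact_mod_cast ha₀) (by positivity), padicValRat.of_int, ha₂,
    padicValRat.pow, padicValRat_two_two]
  simp

lemma padicValRat_add_eq_left {p : ℕ} [Fact p.Prime] {q r : ℚ} (hq : q ≠ 0)
    (h : padicValRat p q < padicValRat p r) : padicValRat p (q + r) = padicValRat p q := by
  rcases eq_or_ne r 0 with rfl | hr
  · rw [add_zero]
  have hqr : q + r ≠ 0 := by
    intro hqr
    rw [eq_neg_of_add_eq_zero_right hqr, padicValRat.neg] at h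
    exact h.false
  exact padicValRat.add_eq_of_lt hqr hq hr h

lemma ne_zero_of_padicValRat_ne_zero {p : ℕ} {q : ℚ} (h : padicValRat p q ≠ 0) : q ≠ 0 := by
  rintro rfl
  exact h padicValRat.zero

namespace WeierstrassCurve.Affine

variable {W : WeierstrassCurve.Affine ℚ}

section ShortNF

variable [W.IsShortNF]

lemma Y_ne_negY_of_isShortNF {x y : ℚ} (hy : y ≠ 0) : y ≠ W.negY x y := by
  rw [negY, a₁_of_isShortNF, a₃_of_isShortNF]
  intro h
  exact hy (by linarith)

lemma slope_self_of_isShortNF {x y : ℚ} (hy : y ≠ 0) :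
    W.slope x x y y = (3 * x ^ 2 + W.a₄) / (2 * y) := by
  rw [slope_of_Y_ne rfl (Y_ne_negY_of_isShortNF hy)]
  simp only [negY, a₁_of_isShortNF, a₂_of_isShortNF, a₃_of_isShortNF]
  ring_nf

lemma padicValRat_two_slope_self (ha₄ : 0 ≤ padicValRat 2 W.a₄) {x y : ℚ} {k : ℕ}
    (hk : 1 ≤ k) (hx : padicValRat 2 x = -2 * k) (hy : padicValRat 2 y = -3 * k) :
    padicValRat 2 (W.slope x x y y) = -k - 1 := by
  have hx₀ : x ≠ 0 := ne_zero_of_padicValRat_ne_zero (p := 2) (by omega)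
  have hy₀ : y ≠ 0 := ne_zero_of_padicValRat_ne_zero (p := 2) (by omega)
  have h3 : padicValRat 2 3 = 0 := by
    simpa using padicValRat_two_odd_div_two_pow (a := 3) (by decide) 0
  have hnum : padicValRat 2 (3 * x ^ 2 + W.a₄) = -4 * k := by
    rw [padicValRat_add_eq_left (by positivity)] <;>
      rw [padicValRat.mul (by norm_num) (by positivity), h3, padicValRat.pow, hx] <;> omega
  rw [slope_self_of_isShortNF hy₀,
    padicValRat.div (ne_zero_of_padicValRat_ne_zero (p := 2) (by omega)) (by positivity),
    hnum, padicValRat.mul two_ne_zero hy₀, padicValRat_two_two, hy]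
  ring

lemma padicValRat_two_addX_addY_self (ha₄ : 0 ≤ padicValRat 2 W.a₄) {x y : ℚ} {k : ℕ}
    (hk : 1 ≤ k) (hx : padicValRat 2 x = -2 * k) (hy : padicValRat 2 y = -3 * k) :
    padicValRat 2 (W.addX x x (W.slope x x y y)) = -2 * (k + 1) ∧
      padicValRat 2 (W.addY x x y (W.slope x x y y)) = -3 * (k + 1) := by
  have hx₀ : x ≠ 0 := ne_zero_of_padicValRat_ne_zero (p := 2) (by omega)
  have hL₂ := padicValRat_two_slope_self ha₄ hk hx hy
  set L := W.slope x x y y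
  have hL₀ : L ≠ 0 := ne_zero_of_padicValRat_ne_zero (p := 2) (by omega)
  have hX : W.addX x x L = L ^ 2 + -(2 * x) := by
    simp only [addX, a₁_of_isShortNF, a₂_of_isShortNF]
    ring
  have hX₂ : padicValRat 2 (W.addX x x L) = -2 * (k + 1) := by
    have h2x : padicValRat 2 (-(2 * x)) = 1 - 2 * k := by
      rw [padicValRat.neg, padicValRat.mul two_ne_zero hx₀, padicValRat_two_two, hx]
      ring
    have hL2 : padicValRat 2 (L ^ 2) = -2 * (k + 1) := by
      rw [padicValRat.pow, hL₂]
      ring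
    rw [hX, padicValRat_add_eq_left (pow_ne_zero 2 hL₀) (by omega), hL2]
  have hX₀ : W.addX x x L ≠ 0 := ne_zero_of_padicValRat_ne_zero (p := 2) (by omega)
  have hY : W.addY x x y L = L * (-W.addX x x L + x) + -y := by
    simp only [addY, negAddY, negY, a₁_of_isShortNF, a₃_of_isShortNF]
    ring
  have hdiff : padicValRat 2 (-W.addX x x L + x) = -2 * (k + 1) := by
    rw [padicValRat_add_eq_left (neg_ne_zero.2 hX₀) (by rw [padicValRat.neg]; omega),
      padicValRat.neg, hX₂]
  have hprod : padicValRat 2 (L * (-W.addX x x L + x)) = -3 * (k + 1) := by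
    rw [padicValRat.mul hL₀ (ne_zero_of_padicValRat_ne_zero (p := 2) (by omega)), hL₂, hdiff]
    ring
  refine ⟨hX₂, ?_⟩
  rw [hY, padicValRat_add_eq_left (ne_zero_of_padicValRat_ne_zero (p := 2) (by omega))
    (by rw [padicValRat.neg]; omega), hprod]

end ShortNF

namespace Point

/-- For `k ≥ 1` these are the points of `E₁(ℚ₂)` of exact depth `k` in the filtration
`E_k(ℚ₂) = {v₂(x) ≤ -2k}` of the formal group. -/
def HasTwoAdicLevel (P : W.Point) (k : ℕ) : Prop :=
  ∃ x y, ∃ h : W.Nonsingular x y,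
    P = some x y h ∧ padicValRat 2 x = -2 * k ∧ padicValRat 2 y = -3 * k

lemma HasTwoAdicLevel.unique {P : W.Point} {k l : ℕ} (hk : P.HasTwoAdicLevel k)
    (hl : P.HasTwoAdicLevel l) : k = l := by
  obtain ⟨x, y, h, rfl, hx, -⟩ := hk
  obtain ⟨x', y', h', hP, hx', -⟩ := hl
  obtain ⟨rfl, -⟩ := some.inj hP
  omega

variable [W.IsShortNF]

lemma HasTwoAdicLevel.two_nsmul (ha₄ : 0 ≤ padicValRat 2 W.a₄) {P : W.Point} {k : ℕ}
    (hP : P.HasTwoAdicLevel k) (hk : 1 ≤ k) : (2 • P).HasTwoAdicLevel (k + 1) := by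
  obtain ⟨x, y, h, rfl, hx, hy⟩ := hP
  have hy₀ : y ≠ 0 := ne_zero_of_padicValRat_ne_zero (p := 2) (by omega)
  rw [_root_.two_nsmul, add_self_of_Y_ne (Y_ne_negY_of_isShortNF hy₀)]
  exact ⟨_, _, _, rfl, by exact_mod_cast padicValRat_two_addX_addY_self ha₄ hk hx hy⟩

lemma HasTwoAdicLevel.two_pow_nsmul (ha₄ : 0 ≤ padicValRat 2 W.a₄) {P : W.Point} {k : ℕ}
    (hP : P.HasTwoAdicLevel k) (hk : 1 ≤ k) (n : ℕ) : (2 ^ n • P).HasTwoAdicLevel (k + n) := by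
  induction n with
  | zero => simpa using hP
  | succ n ih =>
    rw [pow_succ, mul_nsmul, ← add_assoc]
    exact ih.two_nsmul ha₄ (by omega)

lemma HasTwoAdicLevel.not_isOfFinAddOrder (ha₄ : 0 ≤ padicValRat 2 W.a₄) {P : W.Point}
    {k : ℕ} (hP : P.HasTwoAdicLevel k) (hk : 1 ≤ k) : ¬IsOfFinAddOrder P := by
  intro hfin
  have hinj : Function.Injective fun n : ℕ ↦ 2 ^ n • P := fun m n hmn ↦ by
    have hm := hP.two_pow_nsmul ha₄ hk m
    rw [show 2 ^ m • P = 2 ^ n • P from hmn] at hm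
    have := hm.unique (hP.two_pow_nsmul ha₄ hk n)
    omega
  refine Set.infinite_range_of_injective hinj (hfin.finite_multiples.subset ?_)
  rintro _ ⟨n, rfl⟩
  exact ⟨2 ^ n, rfl⟩

end Point

end WeierstrassCurve.Affine

open WeierstrassCurve.Affine

instance : E00.IsShortNF := ⟨rfl, rfl, rfl⟩

lemma E00_padicValRat_two_a₄_nonneg : 0 ≤ padicValRat 2 E00.a₄ := by
  simpa [E00] using zero_le_padicValRat_of_nat (p := 2) 2025

lemma E00_two_nsmul_hasTwoAdicLevel_one (h : E00.Nonsingular 15 90) :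
    (2 • Point.some 15 90 h).HasTwoAdicLevel 1 := by
  have hy : (90 : ℚ) ≠ 0 := by norm_num
  rw [two_nsmul, Point.add_self_of_Y_ne (Y_ne_negY_of_isShortNF hy)]
  have hx₂ : E00.addX 15 15 (E00.slope 15 15 90 90) = (105 : ℤ) / 2 ^ 2 := by
    rw [slope_self_of_isShortNF hy]
    norm_num [E00]
  have hy₂ : E00.addY 15 15 90 (E00.slope 15 15 90 90) = (-45 : ℤ) / 2 ^ 3 := by
    rw [slope_self_of_isShortNF hy]
    norm_num [E00, addY]
  refine ⟨_, _, _, rfl, ?_, ?_⟩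
  · rw [hx₂, padicValRat_two_odd_div_two_pow (by decide)]; rfl
  · rw [hy₂, padicValRat_two_odd_div_two_pow (by decide)]; rfl

/-- The point P₁ = (15, 90) on Y² = X³ - 2025X + 35100 has infinite order
in the group of rational points. -/
theorem stmt_13 (h : E00.Nonsingular 15 90) :
    ∀ n : ℕ, n ≠ 0 → n • (WeierstrassCurve.Affine.Point.some _ _ h) ≠ 0 := by
  intro n hn hnP
  have hfin : IsOfFinAddOrder (Point.some _ _ h) :=
    isOfFinAddOrder_iff_nsmul_eq_zero.2 ⟨n, Nat.pos_of_ne_zero hn, hnP⟩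
  exact (E00_two_nsmul_hasTwoAdicLevel_one h).not_isOfFinAddOrder
    E00_padicValRat_two_a₄_nonneg le_rfl (isOfFinAddOrder_nsmul.2 (Or.inl hfin))
end

section
/- For all nonzero rational numbers a, b, c and any rational x, y, z, setting x = X/(a⁸b¹⁰c¹²), y = -Y/(a⁵b⁷c⁸), z = -Z/(a³b⁴c⁵), the equation a x² + b y³ + c z⁵ = d is equivalent to X² - Y³ - Z⁵ = a¹⁵ b²⁰ c²⁴ d. -/
/-! The weights are chosen so that all three terms acquire the same factor:
a·(a⁸b¹⁰c¹²)⁻² = b·(a⁵b⁷c⁸)⁻³ = c·(a³b⁴c⁵)⁻⁵ = (a¹⁵b²⁰c²⁴)⁻¹, and the odd powers absorb the signs of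
y and z. Hence the substitution turns ax² + by³ + cz⁵ into (X² - Y³ - Z⁵)/(a¹⁵b²⁰c²⁴). -/

theorem mul_sq_add_mul_cube_add_mul_pow_five_of_rescale {K : Type*} [Field K] {a b c : K}
    (ha : a ≠ 0) (hb : b ≠ 0) (hc : c ≠ 0) (X Y Z : K) :
    a * (X / (a ^ 8 * b ^ 10 * c ^ 12)) ^ 2 + b * (-Y / (a ^ 5 * b ^ 7 * c ^ 8)) ^ 3
        + c * (-Z / (a ^ 3 * b ^ 4 * c ^ 5)) ^ 5
      = (X ^ 2 - Y ^ 3 - Z ^ 5) / (a ^ 15 * b ^ 20 * c ^ 24) := by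
  field_simp
  ring

/-- For nonzero rationals a, b, c, setting x = X/(a⁸b¹⁰c¹²), y = -Y/(a⁵b⁷c⁸),
z = -Z/(a³b⁴c⁵), the equation ax² + by³ + cz⁵ = d is equivalent to
X² - Y³ - Z⁵ = a¹⁵b²⁰c²⁴d. -/
theorem stmt_15 (a b c d : ℚ) (ha : a ≠ 0) (hb : b ≠ 0) (hc : c ≠ 0)
    (X Y Z : ℚ) :
    let x : ℚ := X / (a ^ 8 * b ^ 10 * c ^ 12)
    let y : ℚ := -Y / (a ^ 5 * b ^ 7 * c ^ 8)
    let z : ℚ := -Z / (a ^ 3 * b ^ 4 * c ^ 5)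
    (a * x ^ 2 + b * y ^ 3 + c * z ^ 5 = d) ↔
    (X ^ 2 - Y ^ 3 - Z ^ 5 = a ^ 15 * b ^ 20 * c ^ 24 * d) := by
  intro x y z
  have hscale : a ^ 15 * b ^ 20 * c ^ 24 ≠ 0 := by positivity
  rw [mul_sq_add_mul_cube_add_mul_pow_five_of_rescale ha hb hc, div_eq_iff hscale, mul_comm d]
end

section
/- For all nonzero integers a, b, c, d with abc ≠ 0, the identity a·((25875323c¹⁸ + 720748a¹⁵b²⁰c¹²d + 8336a³⁰b⁴⁰c⁶d² + 64a⁴⁵b⁶⁰d³)/(1560896 a⁸b¹⁰c¹⁵))² + b·(-(87709c¹² + 1544a¹⁵b²⁰c⁶d + 16a³⁰b⁴⁰d²)/(13456 a⁵b⁷c¹⁰))³ + c·((135c⁶ + 4a¹⁵b²⁰d)/(116 a³b⁴c⁵))⁵ = d holds. -/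
/-- Explicit rational point on ax² + by³ + cz⁵ = d for nonzero a, b, c, d. -/
theorem stmt_16 (a b c d : ℚ) (ha : a ≠ 0) (hb : b ≠ 0) (hc : c ≠ 0) (hd : d ≠ 0) :
    a * ((25875323 * c ^ 18 + 720748 * a ^ 15 * b ^ 20 * c ^ 12 * d +
          8336 * a ^ 30 * b ^ 40 * c ^ 6 * d ^ 2 + 64 * a ^ 45 * b ^ 60 * d ^ 3) /
        (1560896 * a ^ 8 * b ^ 10 * c ^ 15)) ^ 2 +
    b * (-(87709 * c ^ 12 + 1544 * a ^ 15 * b ^ 20 * c ^ 6 * d +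
          16 * a ^ 30 * b ^ 40 * d ^ 2) /
        (13456 * a ^ 5 * b ^ 7 * c ^ 10)) ^ 3 +
    c * ((135 * c ^ 6 + 4 * a ^ 15 * b ^ 20 * d) /
        (116 * a ^ 3 * b ^ 4 * c ^ 5)) ^ 5 = d := by
  field_simp
  ring
end

section
/- The quadruple p = -a u⁵/2, q = 3a²u¹⁰/16, r = a³u¹⁵/64, v = -a u⁶/8 satisfies the system of equations q² + 2pr + 10au²v³ = 0, 2pq + 2r + 10au³v² = 0, p² + 2q + 5au⁴v = 0, 2p + au⁵ = 0, and it is the unique solution of this system with p, q, r, v ∈ ℚ(u). -/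
/-!
The last three equations are triangular in p, q, r, so p, q, r are determined by v. Substituting them
into the first equation leaves 5au²(8v + au⁶)(16v² + 16au⁶v + a²u¹²) = 0. The quadratic factor
equals (4v + 2au⁶)² - 3(au⁶)², so it has no root in ℚ(u): a square root of 3 in ℚ(u) would have a
rational leading coefficient whose square is 3.
-/

open Polynomial

theorem RatFunc.not_isSquare_C {K : Type*} [Field K] {c : K} (hc : ¬IsSquare c) :
    ¬IsSquare (RatFunc.C c) := by
  rintro ⟨s, hs⟩
  have hdenom : algebraMap K[X] (RatFunc K) s.denom ≠ 0 :=
    RatFunc.algebraMap_ne_zero s.denom_ne_zero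
  rw [← RatFunc.num_div_denom s, div_mul_div_comm, eq_div_iff (mul_ne_zero hdenom hdenom),
    ← RatFunc.algebraMap_C, ← map_mul, ← map_mul, ← map_mul] at hs
  have hpoly : Polynomial.C c * (s.denom * s.denom) = s.num * s.num :=
    RatFunc.algebraMap_injective K hs
  have hlead := congrArg leadingCoeff hpoly
  rw [leadingCoeff_mul, leadingCoeff_mul, leadingCoeff_mul, leadingCoeff_C,
    (RatFunc.monic_denom s).leadingCoeff, mul_one, mul_one] at hlead
  exact hc ⟨_, hlead⟩

theorem Rat.not_isSquare_three : ¬IsSquare (3 : ℚ) := by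
  rw [Rat.isSquare_iff]
  norm_num

section

variable {F : Type*} [Field F]

theorem sixteen_sq_add_sixteen_mul_add_sq_ne_zero (hsqrt3 : ¬IsSquare (3 : F)) {w : F}
    (hw : w ≠ 0) (v : F) :
    16 * v ^ 2 + 16 * w * v + w ^ 2 ≠ 0 := by
  intro h
  refine hsqrt3 ⟨(4 * v + 2 * w) / w, ?_⟩
  field_simp
  linear_combination -h

theorem degree_one_conditions_iff [CharZero F] (hsqrt3 : ¬IsSquare (3 : F)) {a u : F}
    (ha : a ≠ 0) (hu : u ≠ 0) (p q r v : F) :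
    (q ^ 2 + 2 * p * r + 10 * a * u ^ 2 * v ^ 3 = 0 ∧
       2 * p * q + 2 * r + 10 * a * u ^ 3 * v ^ 2 = 0 ∧
       p ^ 2 + 2 * q + 5 * a * u ^ 4 * v = 0 ∧
       2 * p + a * u ^ 5 = 0) ↔
      (p = -a * u ^ 5 / 2 ∧ q = 3 * a ^ 2 * u ^ 10 / 16 ∧
       r = a ^ 3 * u ^ 15 / 64 ∧ v = -a * u ^ 6 / 8) := by
  constructor
  · rintro ⟨h1, h2, h3, h4⟩
    have hp : p = -a * u ^ 5 / 2 := by linear_combination h4 / 2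
    have hq : q = -a ^ 2 * u ^ 10 / 8 - 5 * a * u ^ 4 * v / 2 := by
      linear_combination h3 / 2 - (p - a * u ^ 5 / 2) * hp / 2
    have hr : r = -a ^ 3 * u ^ 15 / 16 - 5 * a ^ 2 * u ^ 9 * v / 4 - 5 * a * u ^ 3 * v ^ 2 := by
      linear_combination h2 / 2 - q * hp - (-a * u ^ 5 / 2) * hq
    have hcubic : 5 * a * u ^ 2 *
        ((8 * v + a * u ^ 6) * (16 * v ^ 2 + 16 * (a * u ^ 6) * v + (a * u ^ 6) ^ 2)) = 0 := by
      subst hp hq hr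
      linear_combination 64 * h1
    have hquad :=
      sixteen_sq_add_sixteen_mul_add_sq_ne_zero hsqrt3 (mul_ne_zero ha (pow_ne_zero 6 hu)) v
    have hv : 8 * v + a * u ^ 6 = 0 := by simpa [ha, hu, hquad] using hcubic
    refine ⟨hp, ?_, ?_, by linear_combination hv / 8⟩
    · linear_combination hq - 5 * a * u ^ 4 * hv / 16
    · linear_combination hr - (5 * a * u ^ 3 * v / 8 + 5 * a ^ 2 * u ^ 9 / 64) * hv
  · rintro ⟨rfl, rfl, rfl, rfl⟩
    exact ⟨by ring, by ring, by ring, by ring⟩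

end

/-- Over ℚ(u), the quadruple p = -au⁵/2, q = 3a²u¹⁰/16, r = a³u¹⁵/64, v = -au⁶/8
is the unique solution of the system q² + 2pr + 10au²v³ = 0, 2pq + 2r + 10au³v² = 0,
p² + 2q + 5au⁴v = 0, 2p + au⁵ = 0. -/
theorem stmt_17 (a : ℚ) (ha : a ≠ 0) :
    let u : RatFunc ℚ := RatFunc.X
    let a' : RatFunc ℚ := RatFunc.C a
    ∀ p q r v : RatFunc ℚ,
      (q ^ 2 + 2 * p * r + 10 * a' * u ^ 2 * v ^ 3 = 0 ∧
       2 * p * q + 2 * r + 10 * a' * u ^ 3 * v ^ 2 = 0 ∧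
       p ^ 2 + 2 * q + 5 * a' * u ^ 4 * v = 0 ∧
       2 * p + a' * u ^ 5 = 0) ↔
      (p = -a' * u ^ 5 / 2 ∧ q = 3 * a' ^ 2 * u ^ 10 / 16 ∧
       r = a' ^ 3 * u ^ 15 / 64 ∧ v = -a' * u ^ 6 / 8) := by
  have hsqrt3 : ¬IsSquare (3 : RatFunc ℚ) := by
    simpa using RatFunc.not_isSquare_C Rat.not_isSquare_three
  exact degree_one_conditions_iff hsqrt3 ((_root_.map_ne_zero RatFunc.C).mpr ha)
    RatFunc.X_ne_zero
end

section
/- For all nonzero rational numbers a, b and every nonzero rational u, the identity ((118441a¹⁸u⁹⁰ + 2¹⁵·11863·a¹²bu⁶⁰ - 2³⁰·137·a⁶b²u³⁰ + 2⁴⁵b³)/(2⁹·29³·a¹⁵u⁷⁵))² + a·(-(9a⁶u³⁰ - 2¹³b)/(58a⁵u²⁴))⁵ - ((7a⁶u³⁰ - 2¹⁵b)/(232a⁵u²⁵))⁶ = b holds. In particular, the surface x² + ay⁵ - z⁶ = b has infinitely many rational points. -/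
/-!
The identity is checked by clearing denominators. The third coordinate
`z(u) = (7a⁶u³⁰ - 2¹⁵b) / (232a⁵u²⁵)` takes each value `c` at only finitely many `u ≠ 0`, namely
roots of the nonzero polynomial `7a⁶X³⁰ - 232a⁵cX²⁵ - 2¹⁵b`, so the infinitely many nonzero `u`
give infinitely many points.
-/

open Polynomial

section Parametrization

variable {K : Type*} [Field K]

def surfacePointX (a b u : K) : K :=
  (118441 * a ^ 18 * u ^ 90 + 2 ^ 15 * 11863 * a ^ 12 * b * u ^ 60 -
      2 ^ 30 * 137 * a ^ 6 * b ^ 2 * u ^ 30 + 2 ^ 45 * b ^ 3) /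
    (2 ^ 9 * 29 ^ 3 * a ^ 15 * u ^ 75)

def surfacePointY (a b u : K) : K :=
  -(9 * a ^ 6 * u ^ 30 - 2 ^ 13 * b) / (58 * a ^ 5 * u ^ 24)

def surfacePointZ (a b u : K) : K :=
  (7 * a ^ 6 * u ^ 30 - 2 ^ 15 * b) / (232 * a ^ 5 * u ^ 25)

variable [CharZero K] {a : K}

theorem surfacePoint_eq (b : K) (ha : a ≠ 0) {u : K} (hu : u ≠ 0) :
    surfacePointX a b u ^ 2 + a * surfacePointY a b u ^ 5 - surfacePointZ a b u ^ 6 = b := by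
  unfold surfacePointX surfacePointY surfacePointZ
  field_simp
  ring

theorem surfacePointZ_fiber_finite (b : K) (ha : a ≠ 0) (c : K) :
    (({0}ᶜ : Set K) ∩ surfacePointZ a b ⁻¹' {c}).Finite := by
  set p : K[X] := C (7 * a ^ 6) * X ^ 30 - C (232 * a ^ 5 * c) * X ^ 25 - C (2 ^ 15 * b)
  have hp : p ≠ 0 := fun h ↦ by
    have h30 := congrArg (coeff · 30) h
    simp only [p, coeff_sub, coeff_C_mul, coeff_X_pow, coeff_C] at h30
    norm_num at h30
    exact ha h30
  refine (finite_setOfPred_isRoot hp).subset ?_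
  rintro u ⟨hu, hzc⟩
  have hden : 232 * a ^ 5 * u ^ 25 ≠ 0 :=
    mul_ne_zero (mul_ne_zero (by norm_num) (pow_ne_zero _ ha)) (pow_ne_zero _ hu)
  have hzc' : 7 * a ^ 6 * u ^ 30 - 2 ^ 15 * b = c * (232 * a ^ 5 * u ^ 25) :=
    (div_eq_iff hden).mp hzc
  simp only [Set.mem_ofPred_eq, IsRoot, p, eval_sub, eval_mul, eval_C, eval_pow, eval_X]
  linear_combination hzc'

theorem surfacePointZ_image_infinite (b : K) (ha : a ≠ 0) :
    (surfacePointZ a b '' ({0}ᶜ : Set K)).Infinite := fun hfin ↦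
  (Set.finite_singleton 0).infinite_compl <|
    Set.Finite.of_finite_fibers _ hfin fun c _ ↦ surfacePointZ_fiber_finite b ha c

end Parametrization

theorem stmt_18_general (a b : ℚ) (ha : a ≠ 0) :
    (∀ u : ℚ, u ≠ 0 →
      ((118441 * a ^ 18 * u ^ 90 + 2 ^ 15 * 11863 * a ^ 12 * b * u ^ 60 -
          2 ^ 30 * 137 * a ^ 6 * b ^ 2 * u ^ 30 + 2 ^ 45 * b ^ 3) /
        (2 ^ 9 * 29 ^ 3 * a ^ 15 * u ^ 75)) ^ 2 +
      a * (-(9 * a ^ 6 * u ^ 30 - 2 ^ 13 * b) / (58 * a ^ 5 * u ^ 24)) ^ 5 -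
      ((7 * a ^ 6 * u ^ 30 - 2 ^ 15 * b) / (232 * a ^ 5 * u ^ 25)) ^ 6 = b) ∧
    {P : ℚ × ℚ × ℚ | P.1 ^ 2 + a * P.2.1 ^ 5 - P.2.2 ^ 6 = b}.Infinite := by
  refine ⟨fun u hu ↦ surfacePoint_eq b ha hu, ?_⟩
  refine Set.Infinite.of_image (fun P : ℚ × ℚ × ℚ ↦ P.2.2)
    ((surfacePointZ_image_infinite b ha).mono ?_)
  rintro _ ⟨u, hu, rfl⟩
  exact ⟨(surfacePointX a b u, surfacePointY a b u, surfacePointZ a b u),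
    surfacePoint_eq b ha hu, rfl⟩

/-- For nonzero rationals a, b and every nonzero rational u, the stated explicit
identity holds; in particular x² + ay⁵ - z⁶ = b has infinitely many rational points. -/
theorem stmt_18 (a b : ℚ) (ha : a ≠ 0) (hb : b ≠ 0) :
    (∀ u : ℚ, u ≠ 0 →
      ((118441 * a ^ 18 * u ^ 90 + 2 ^ 15 * 11863 * a ^ 12 * b * u ^ 60 -
          2 ^ 30 * 137 * a ^ 6 * b ^ 2 * u ^ 30 + 2 ^ 45 * b ^ 3) /
        (2 ^ 9 * 29 ^ 3 * a ^ 15 * u ^ 75)) ^ 2 +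
      a * (-(9 * a ^ 6 * u ^ 30 - 2 ^ 13 * b) / (58 * a ^ 5 * u ^ 24)) ^ 5 -
      ((7 * a ^ 6 * u ^ 30 - 2 ^ 15 * b) / (232 * a ^ 5 * u ^ 25)) ^ 6 = b) ∧
    {P : ℚ × ℚ × ℚ | P.1 ^ 2 + a * P.2.1 ^ 5 - P.2.2 ^ 6 = b}.Infinite :=
  stmt_18_general a b ha
end
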